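/- Let 𝔛 be a symmetric association scheme of class d ≥ 2, let i ∈ {1, 2, …, d−1}, and set ℐ = N_0 ∪ N_1 ∪ ⋯ ∪ N_{i−1}. If N_i is empty, then the Krein parameters satisfy q_{1,j}^k = 0 for every j ∈ ℐ and every k ∉ ℐ. -/

import Mathlib

open Matrix BigOperators Finset

/-- A symmetric association scheme of class `d` on a finite vertex set `V`,
bundled together with its adjacency matrices, primitive idempotents,
eigenmatrices `P`, `Q` and Krein parameters. -/
structure SymmAssocScheme (d : ℕ) (V : Type*) [Fintype V] [DecidableEq V] where
  /-- the relations `R_0, …, R_d` -/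
  R : Fin (d + 1) → Set (V × V)
  R_nonempty : ∀ i, (R i).Nonempty
  R_zero : R 0 = {p : V × V | p.1 = p.2}
  R_cover : ∀ p : V × V, ∃ i, p ∈ R i
  R_disjoint : ∀ i j, i ≠ j → R i ∩ R j = ∅
  R_symm : ∀ i, ∀ x y : V, (x, y) ∈ R i → (y, x) ∈ R i
  /-- the intersection numbers `p_{ij}^k` -/
  pnum : Fin (d + 1) → Fin (d + 1) → Fin (d + 1) → ℕ
  pnum_spec : ∀ i j k, ∀ x y : V, (x, y) ∈ R k →
    pnum i j k = {z : V | (x, z) ∈ R i ∧ (z, y) ∈ R j}.ncard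
  /-- the adjacency matrices `A_0, …, A_d` -/
  A : Fin (d + 1) → Matrix V V ℂ
  A_of_mem : ∀ i, ∀ x y : V, (x, y) ∈ R i → A i x y = 1
  A_of_not_mem : ∀ i, ∀ x y : V, (x, y) ∉ R i → A i x y = 0
  /-- the primitive idempotents `E_0, …, E_d` -/
  E : Fin (d + 1) → Matrix V V ℂ
  E_zero : E 0 = (Fintype.card V : ℂ)⁻¹ • Matrix.of (fun _ _ => (1 : ℂ))
  E_sum : ∑ i, E i = (1 : Matrix V V ℂ)
  E_mul : ∀ i j, E i * E j = if i = j then E i else 0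
  E_ne_zero : ∀ i, E i ≠ 0
  /-- the first eigenmatrix: `P i j = p_i(j)` -/
  P : Fin (d + 1) → Fin (d + 1) → ℝ
  /-- the second eigenmatrix: `Q i j = q_i(j)`; in particular `θ*_j = Q 1 j` -/
  Q : Fin (d + 1) → Fin (d + 1) → ℝ
  A_eq : ∀ i, A i = ∑ j, (P i j : ℂ) • E j
  E_eq : ∀ i, E i = (Fintype.card V : ℂ)⁻¹ • ∑ j, (Q i j : ℂ) • A j
  /-- the Krein parameters `q_{ij}^k` -/
  krein : Fin (d + 1) → Fin (d + 1) → Fin (d + 1) → ℝ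
  krein_spec : ∀ i j, Matrix.hadamard (E i) (E j) =
    (Fintype.card V : ℂ)⁻¹ • ∑ k, (krein i j k : ℂ) • E k
  krein_nonneg : ∀ i j k, 0 ≤ krein i j k

namespace SymmAssocScheme

variable {d : ℕ} {V : Type*} [Fintype V] [DecidableEq V]

/-- the `h`-fold Hadamard power `E_1^{∘h}` of `E_1`, with `E_1^{∘0} = J`
the all-ones matrix. -/
noncomputable def hadPowE1 (S : SymmAssocScheme d V) : ℕ → Matrix V V ℂ
  | 0 => Matrix.of fun _ _ => 1
  | n + 1 => Matrix.hadamard (hadPowE1 S n) (S.E 1)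

/-- `N h` is the set of indices `j` such that `E_j` is a component of `E_1^{∘h}`
(i.e. `E_j · E_1^{∘h} ≠ 0`) but not a component of `E_1^{∘l}` for any `l < h`. -/
def N (S : SymmAssocScheme d V) (h : ℕ) : Set (Fin (d + 1)) :=
  {j | S.E j * S.hadPowE1 h ≠ 0 ∧ ∀ l < h, S.E j * S.hadPowE1 l = 0}

/-- `𝔛` is `Q`-polynomial with respect to the ordering `E_{σ 0}, E_{σ 1}, …, E_{σ d}`:
for each `h` there is a polynomial `v*_h` of degree exactly `h` with
`q_{σ h}(j) = v*_h(q_1(j))` for all `j`. -/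
def IsQPolyOrdering (S : SymmAssocScheme d V) (σ : Equiv.Perm (Fin (d + 1))) : Prop :=
  ∀ h : Fin (d + 1), ∃ v : Polynomial ℝ, v.degree = (h : ℕ) ∧
    ∀ j, S.Q (σ h) j = v.eval (S.Q 1 j)

/-- `𝔛` is `Q`-polynomial with respect to `E_1`: it is `Q`-polynomial with respect
to some ordering of the form `E_0, E_1, E_{i_2}, …, E_{i_d}`. -/
def IsQPolyE1 (S : SymmAssocScheme d V) : Prop :=
  ∃ σ : Equiv.Perm (Fin (d + 1)), σ 0 = 0 ∧ σ 1 = 1 ∧ S.IsQPolyOrdering σ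

/-- `𝔛` is `P`-polynomial with respect to the ordering `A_{σ 0}, A_{σ 1}, …, A_{σ d}`. -/
def IsPPolyOrdering (S : SymmAssocScheme d V) (σ : Equiv.Perm (Fin (d + 1))) : Prop :=
  ∀ h : Fin (d + 1), ∃ v : Polynomial ℝ, v.degree = (h : ℕ) ∧
    ∀ j, S.P (σ h) j = v.eval (S.P 1 j)

/-- `𝔛` is `P`-polynomial with respect to `A_1`. -/
def IsPPolyA1 (S : SymmAssocScheme d V) : Prop :=
  ∃ σ : Equiv.Perm (Fin (d + 1)), σ 0 = 0 ∧ σ 1 = 1 ∧ S.IsPPolyOrdering σ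

/-- the ratio `K_i = ∏_{j=1, j≠i}^d (θ*_0 − θ*_j)/(θ*_i − θ*_j)`,
where `θ*_j = q_1(j)`. -/
noncomputable def K (S : SymmAssocScheme d V) (i : Fin (d + 1)) : ℝ :=
  ∏ j ∈ Finset.univ.filter (fun j => j ≠ 0 ∧ j ≠ i),
    (S.Q 1 0 - S.Q 1 j) / (S.Q 1 i - S.Q 1 j)

end SymmAssocScheme

/-!
Write `E₁^{∘h} = ∑ₘ c_h(m) Eₘ`. Hadamard-multiplying by `E₁` and expanding `Eₘ ∘ E₁` through the
Krein parameters gives `c₀ = |X| δ_{·,0}` and `c_{h+1}(k) = |X|⁻¹ ∑ₘ c_h(m) q_{1,m}^k`, so all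
`c_h(m)` are nonnegative, and `E_k` is a component of `E₁^{∘h}` exactly when `c_h(k) ≠ 0`.
Hence if `E_j` is a component of `E₁^{∘h}` and `q_{1,j}^k > 0`, then `c_{h+1}(k) > 0`: no
cancellation can occur. For `j ∈ N_h` with `h < i` this puts `k` in some `N_l` with `l ≤ h + 1 ≤ i`,
and `l ≠ i` because `N_i = ∅`.
-/

theorem Matrix.sum_hadamard {ι m n α : Type*} [NonUnitalNonAssocSemiring α] (s : Finset ι)
    (f : ι → Matrix m n α) (B : Matrix m n α) : (∑ i ∈ s, f i) ⊙ B = ∑ i ∈ s, f i ⊙ B := by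
  ext x y
  simp only [hadamard_apply, Matrix.sum_apply, Finset.sum_mul]

namespace SymmAssocScheme

variable {d : ℕ} {V : Type*} [Fintype V] [DecidableEq V]

/-- The coefficients of `E₁^{∘l}` in the basis `E₀, …, E_d` (see `hadPowE1_eq_sum`). -/
noncomputable def hadPowE1Coeff (S : SymmAssocScheme d V) : ℕ → Fin (d + 1) → ℝ
  | 0 => fun m => if m = 0 then (Fintype.card V : ℝ) else 0
  | l + 1 => fun k => (Fintype.card V : ℝ)⁻¹ * ∑ m, S.hadPowE1Coeff l m * S.krein 1 m k

theorem card_ne_zero (S : SymmAssocScheme d V) : Fintype.card V ≠ 0 := fun h =>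
  have : IsEmpty V := Fintype.card_eq_zero_iff.mp h
  S.E_ne_zero 0 (Subsingleton.elim _ _)

theorem hadPowE1Coeff_nonneg (S : SymmAssocScheme d V) : ∀ l m, 0 ≤ S.hadPowE1Coeff l m
  | 0, m => by unfold hadPowE1Coeff; split <;> positivity
  | l + 1, k => mul_nonneg (by positivity) <| Finset.sum_nonneg fun m _ =>
    mul_nonneg (S.hadPowE1Coeff_nonneg l m) (S.krein_nonneg 1 m k)

theorem hadPowE1Coeff_succ_ne_zero (S : SymmAssocScheme d V) {l : ℕ} {j k : Fin (d + 1)}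
    (hj : S.hadPowE1Coeff l j ≠ 0) (hjk : S.krein 1 j k ≠ 0) : S.hadPowE1Coeff (l + 1) k ≠ 0 := by
  have hsum : 0 < ∑ m, S.hadPowE1Coeff l m * S.krein 1 m k :=
    Finset.sum_pos' (fun m _ => mul_nonneg (S.hadPowE1Coeff_nonneg l m) (S.krein_nonneg 1 m k))
      ⟨j, Finset.mem_univ j, mul_pos ((S.hadPowE1Coeff_nonneg l j).lt_of_ne' hj)
        ((S.krein_nonneg 1 j k).lt_of_ne' hjk)⟩
  exact mul_ne_zero (inv_ne_zero (Nat.cast_ne_zero.mpr S.card_ne_zero)) hsum.ne'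

theorem hadPowE1_eq_sum (S : SymmAssocScheme d V) (l : ℕ) :
    S.hadPowE1 l = ∑ m, (S.hadPowE1Coeff l m : ℂ) • S.E m := by
  have hcard : (Fintype.card V : ℂ) ≠ 0 := Nat.cast_ne_zero.mpr S.card_ne_zero
  induction l with
  | zero =>
    simp only [hadPowE1, hadPowE1Coeff, apply_ite (fun x : ℝ => (x : ℂ)), Complex.ofReal_natCast,
      Complex.ofReal_zero, ite_smul, zero_smul, Finset.sum_ite_eq', Finset.mem_univ, if_true,
      S.E_zero, smul_smul, mul_inv_cancel₀ hcard, one_smul]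
  | succ l ih =>
    rw [hadPowE1, ih, Matrix.sum_hadamard]
    simp_rw [smul_hadamard, hadamard_comm _ (S.E 1), S.krein_spec, Finset.smul_sum, smul_smul]
    rw [Finset.sum_comm]
    refine Finset.sum_congr rfl fun k _ => ?_
    rw [← Finset.sum_smul, hadPowE1Coeff]
    push_cast
    rw [Finset.mul_sum]
    exact congrArg₂ _ (Finset.sum_congr rfl fun m _ => by ring) rfl

theorem E_mul_hadPowE1 (S : SymmAssocScheme d V) (l : ℕ) (k : Fin (d + 1)) :
    S.E k * S.hadPowE1 l = (S.hadPowE1Coeff l k : ℂ) • S.E k := by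
  simp [hadPowE1_eq_sum, Matrix.mul_sum, S.E_mul]

theorem E_mul_hadPowE1_ne_zero_iff (S : SymmAssocScheme d V) {l : ℕ} {k : Fin (d + 1)} :
    S.E k * S.hadPowE1 l ≠ 0 ↔ S.hadPowE1Coeff l k ≠ 0 := by
  simp [E_mul_hadPowE1, S.E_ne_zero k]

theorem E_mul_hadPowE1_succ_ne_zero (S : SymmAssocScheme d V) {l : ℕ} {j k : Fin (d + 1)}
    (hj : S.E j * S.hadPowE1 l ≠ 0) (hjk : S.krein 1 j k ≠ 0) :
    S.E k * S.hadPowE1 (l + 1) ≠ 0 :=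
  S.E_mul_hadPowE1_ne_zero_iff.mpr <|
    S.hadPowE1Coeff_succ_ne_zero (S.E_mul_hadPowE1_ne_zero_iff.mp hj) hjk

theorem exists_mem_N_of_E_mul_hadPowE1_ne_zero (S : SymmAssocScheme d V) {n : ℕ}
    {k : Fin (d + 1)} (hk : S.E k * S.hadPowE1 n ≠ 0) : ∃ l ≤ n, k ∈ S.N l := by
  classical
  have hex : ∃ l, S.E k * S.hadPowE1 l ≠ 0 := ⟨n, hk⟩
  exact ⟨Nat.find hex, Nat.find_min' hex hk,
    Nat.find_spec hex, fun l hl => not_not.mp (Nat.find_min hex hl)⟩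

end SymmAssocScheme

theorem statement6_general {d : ℕ} {V : Type*} [Fintype V] [DecidableEq V]
    (S : SymmAssocScheme d V)
    (i : ℕ) (hN : S.N i = ∅) :
    ∀ j ∈ {k : Fin (d + 1) | ∃ h < i, k ∈ S.N h},
      ∀ k ∉ {k : Fin (d + 1) | ∃ h < i, k ∈ S.N h},
        S.krein 1 j k = 0 := by
  rintro j ⟨h, hhi, hj⟩ k hk
  by_contra hjk
  obtain ⟨l, hl, hkl⟩ :=
    S.exists_mem_N_of_E_mul_hadPowE1_ne_zero (S.E_mul_hadPowE1_succ_ne_zero hj.1 hjk)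
  have hli : l ≠ i := by
    rintro rfl
    simp [hN] at hkl
  exact hk ⟨l, by omega, hkl⟩

/-- For a symmetric association scheme of class `d ≥ 2`,
`i ∈ {1, …, d−1}` and `ℐ = N_0 ∪ ⋯ ∪ N_{i−1}`: if `N_i` is empty, then the Krein
parameters satisfy `q_{1,j}^k = 0` for every `j ∈ ℐ` and every `k ∉ ℐ`. -/
theorem statement6 {d : ℕ} {V : Type*} [Fintype V] [DecidableEq V]
    (S : SymmAssocScheme d V) (hd : 2 ≤ d)
    (i : ℕ) (hi1 : 1 ≤ i) (hi2 : i ≤ d - 1) (hN : S.N i = ∅) :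
    ∀ j ∈ {k : Fin (d + 1) | ∃ h < i, k ∈ S.N h},
      ∀ k ∉ {k : Fin (d + 1) | ∃ h < i, k ∈ S.N h},
        S.krein 1 j k = 0 :=
  statement6_general S i hN
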